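/- Let u, v, ξ ∈ ℂⁿ (n ≥ 2) where ξ has pairwise distinct coordinates, let 1 ≤ p ≤ ∞ with conjugate exponent q, and suppose |vᵢ - ξᵢ| ≤ |uᵢ - ξᵢ| for all i. Then for all i ≠ j, |uᵢ - vⱼ| ≥ (1 - 2^{1/q} ‖(u - ξ)/d(ξ)‖_p) |ξᵢ - ξⱼ|. -/

import Mathlib

open scoped ENNReal

noncomputable def pnorm (p : ℝ≥0∞) {n : ℕ} (w : Fin n → ℝ) : ℝ :=
  ‖(WithLp.equiv p (Fin n → ℝ)).symm w‖

noncomputable def dmin {n : ℕ} (v : Fin n → ℂ) (i : Fin n) : ℝ :=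
  ⨅ j : {j : Fin n // j ≠ i}, ‖v i - v j.1‖

/-!
Write `w k = |u k - ξ k| / d k(ξ)`. Since `d i(ξ)` and `d j(ξ)` are at most `|ξ i - ξ j|`, both
`|u i - ξ i|` and `|v j - ξ j| ≤ |u j - ξ j|` are at most `w · |ξ i - ξ j|`, so the triangle
inequality along `ξ i, u i, v j, ξ j` gives `(1 - (w i + w j)) |ξ i - ξ j| ≤ |u i - v j|`.
By Hölder (equivalently, the power mean inequality), a sum of `m` coordinates of a vector is at
most `m ^ (1/q)` times its `ℓ^p` norm, whence `w i + w j ≤ 2 ^ (1/q) ‖w‖_p`.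
-/

open Finset

namespace PiLp

/-- For `p = ∞` the exponent is `1`, because `(∞ : ℝ≥0∞).toReal = 0` and `0⁻¹ = 0`. -/
theorem sum_norm_le_card_rpow_mul_norm {ι : Type*} [Fintype ι] {β : ι → Type*}
    [∀ k, SeminormedAddCommGroup (β k)] {p : ℝ≥0∞} (hp : 1 ≤ p) (x : PiLp p β)
    (s : Finset ι) : ∑ k ∈ s, ‖x k‖ ≤ (#s : ℝ) ^ (1 - p.toReal⁻¹) * ‖x‖ := by
  have : Fact (1 ≤ p) := ⟨hp⟩
  rcases eq_or_ne p ∞ with rfl | hp_top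
  · simpa using sum_le_card_nsmul s _ _ fun k _ => norm_apply_le x k
  set r := p.toReal
  have hr : 1 ≤ r := by simpa using ENNReal.toReal_mono hp_top hp
  have hr₀ : 0 < r := zero_lt_one.trans_le hr
  have hpow : (∑ k ∈ s, ‖x k‖) ^ r ≤ (#s : ℝ) ^ (r - 1) * ‖x‖ ^ r := calc
    (∑ k ∈ s, ‖x k‖) ^ r ≤ (#s : ℝ) ^ (r - 1) * ∑ k ∈ s, ‖x k‖ ^ r :=
      Real.rpow_sum_le_const_mul_sum_rpow_of_nonneg s hr fun k _ => norm_nonneg _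
    _ ≤ (#s : ℝ) ^ (r - 1) * ∑ k, ‖x k‖ ^ r := by
      gcongr
      exact subset_univ s
    _ = (#s : ℝ) ^ (r - 1) * ‖x‖ ^ r := by
      rw [norm_eq_sum hr₀, ← Real.rpow_mul (by positivity), one_div_mul_cancel hr₀.ne',
        Real.rpow_one]
  calc ∑ k ∈ s, ‖x k‖ = ((∑ k ∈ s, ‖x k‖) ^ r) ^ r⁻¹ := by
        rw [← Real.rpow_mul (by positivity), mul_inv_cancel₀ hr₀.ne', Real.rpow_one]
    _ ≤ ((#s : ℝ) ^ (r - 1) * ‖x‖ ^ r) ^ r⁻¹ := by gcongr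
    _ = (#s : ℝ) ^ (1 - r⁻¹) * ‖x‖ := by
      rw [Real.mul_rpow (by positivity) (by positivity), ← Real.rpow_mul (by positivity),
        ← Real.rpow_mul (norm_nonneg _), mul_inv_cancel₀ hr₀.ne', Real.rpow_one, sub_mul,
        one_mul, mul_inv_cancel₀ hr₀.ne']

end PiLp

theorem ENNReal.toReal_one_div_eq_one_sub {p q : ℝ≥0∞} (hpq : 1 / p + 1 / q = 1) :
    (1 / q).toReal = 1 - p.toReal⁻¹ := by
  have hp : 1 / p ≠ ∞ := ne_top_of_le_ne_top one_ne_top (le_self_add.trans_eq hpq)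
  have hq : 1 / q ≠ ∞ := ne_top_of_le_ne_top one_ne_top (le_add_self.trans_eq hpq)
  have := congrArg ENNReal.toReal hpq
  rw [ENNReal.toReal_add hp hq, one_div, ENNReal.toReal_inv] at this
  simp only [ENNReal.toReal_one] at this
  linarith

theorem dmin_le {n : ℕ} (ξ : Fin n → ℂ) {i j : Fin n} (hji : j ≠ i) :
    dmin ξ i ≤ ‖ξ i - ξ j‖ :=
  ciInf_le ⟨0, by rintro _ ⟨k, rfl⟩; exact norm_nonneg _⟩ (⟨j, hji⟩ : {k // k ≠ i})

theorem dmin_nonneg {n : ℕ} (ξ : Fin n → ℂ) (i : Fin n) : 0 ≤ dmin ξ i :=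
  Real.iInf_nonneg fun _ => norm_nonneg _

theorem dmin_pos {n : ℕ} {ξ : Fin n → ℂ} (hξ : Function.Injective ξ) {i j : Fin n}
    (hji : j ≠ i) : 0 < dmin ξ i := by
  have : Nonempty {k // k ≠ i} := ⟨⟨j, hji⟩⟩
  obtain ⟨k, hk⟩ := exists_eq_ciInf_of_finite (f := fun k : {k // k ≠ i} => ‖ξ i - ξ k.1‖)
  rw [dmin, ← hk, norm_pos_iff, sub_ne_zero]
  exact hξ.ne k.2.symm

theorem norm_sub_le_div_dmin_mul {n : ℕ} (z ξ : Fin n → ℂ) (hξ : Function.Injective ξ)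
    {i j : Fin n} (hji : j ≠ i) :
    ‖z i - ξ i‖ ≤ ‖z i - ξ i‖ / dmin ξ i * ‖ξ i - ξ j‖ := by
  have hd := dmin_pos hξ hji
  calc ‖z i - ξ i‖ = ‖z i - ξ i‖ / dmin ξ i * dmin ξ i := (div_mul_cancel₀ _ hd.ne').symm
    _ ≤ ‖z i - ξ i‖ / dmin ξ i * ‖ξ i - ξ j‖ := by gcongr; exact dmin_le ξ hji

theorem u_v_xi_inequality_general (n : ℕ) (u v ξ : Fin n → ℂ)
    (hξ : Function.Injective ξ) (p q : ℝ≥0∞) (hp : 1 ≤ p) (hpq : 1/p + 1/q = 1)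
    (hvu : ∀ i, ‖v i - ξ i‖ ≤ ‖u i - ξ i‖) :
    ∀ i j : Fin n, i ≠ j →
      (1 - (2:ℝ) ^ (1/q).toReal * pnorm p (fun k => ‖u k - ξ k‖ / dmin ξ k))
          * ‖ξ i - ξ j‖
        ≤ ‖u i - v j‖ := by
  intro i j hij
  set w : Fin n → ℝ := fun k => ‖u k - ξ k‖ / dmin ξ k
  have hw : w i + w j ≤ (2:ℝ) ^ (1/q).toReal * pnorm p w := by
    have := PiLp.sum_norm_le_card_rpow_mul_norm hp ((WithLp.equiv p _).symm w) {i, j}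
    rw [sum_pair hij, card_pair hij, ← ENNReal.toReal_one_div_eq_one_sub hpq] at this
    have hw₀ : ∀ k, 0 ≤ w k := fun k => div_nonneg (norm_nonneg _) (dmin_nonneg ξ k)
    rw [pnorm]
    simpa only [WithLp.equiv_symm_apply, PiLp.toLp_apply, Real.norm_of_nonneg (hw₀ _),
      Nat.cast_ofNat] using this
  have hi : ‖u i - ξ i‖ ≤ w i * ‖ξ i - ξ j‖ := norm_sub_le_div_dmin_mul u ξ hξ hij.symm
  have hj : ‖v j - ξ j‖ ≤ w j * ‖ξ i - ξ j‖ := by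
    calc ‖v j - ξ j‖ ≤ ‖u j - ξ j‖ := hvu j
      _ ≤ w j * ‖ξ j - ξ i‖ := norm_sub_le_div_dmin_mul u ξ hξ hij
      _ = w j * ‖ξ i - ξ j‖ := by rw [norm_sub_rev]
  have htri : ‖ξ i - ξ j‖ ≤ ‖u i - ξ i‖ + ‖u i - v j‖ + ‖v j - ξ j‖ := by
    simpa only [dist_eq_norm, norm_sub_rev (ξ i)] using dist_triangle4 (ξ i) (u i) (v j) (ξ j)
  nlinarith [norm_nonneg (ξ i - ξ j)]

theorem u_v_xi_inequality (n : ℕ) (hn : 2 ≤ n) (u v ξ : Fin n → ℂ)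
    (hξ : Function.Injective ξ) (p q : ℝ≥0∞) (hp : 1 ≤ p) (hpq : 1/p + 1/q = 1)
    (hvu : ∀ i, ‖v i - ξ i‖ ≤ ‖u i - ξ i‖) :
    ∀ i j : Fin n, i ≠ j →
      (1 - (2:ℝ) ^ (1/q).toReal * pnorm p (fun k => ‖u k - ξ k‖ / dmin ξ k))
          * ‖ξ i - ξ j‖
        ≤ ‖u i - v j‖ :=
  u_v_xi_inequality_general n u v ξ hξ p q hp hpq hvu
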